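/- arXiv:2411.09584 — 6 statements merged into one kernel-verified Lean document; each statement's English description precedes it below -/
import Mathlib

section
/- Let L0, L1, L2, M be real n×n matrices, let k₀ ∈ ℝ, and let ω : ℝ → ℝ and u : ℝ → ℂⁿ be differentiable at k₀ and satisfy W(k, ω(k)) · u(k) = 0 for all k in a neighborhood of k₀, with ω'(k₀) = 0. If z ∈ ℂⁿ satisfies zᴴ · W(k₀, ω(k₀)) = 0 (i.e., z is a left null vector of W(k₀, ω(k₀))), then zᴴ · (−2k₀·L2 + i·L1) · u(k₀) = 0. -/
open Matrix

/-- The waveguide operator `W(k,ω) = (ik)²L₂ + ik L₁ + L₀ + ω² M`. -/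
noncomputable def Wop {n : ℕ} (L0 L1 L2 M : Matrix (Fin n) (Fin n) ℝ) (k ω : ℝ) :
    Matrix (Fin n) (Fin n) ℂ :=
  ((Complex.I * k) ^ 2) • L2.map Complex.ofReal + (Complex.I * k) • L1.map Complex.ofReal +
    L0.map Complex.ofReal + ((ω : ℂ) ^ 2) • M.map Complex.ofReal

private lemma dot_hasDerivAt {n : ℕ} (A : Matrix (Fin n) (Fin n) ℂ) (z : Fin n → ℂ)
    {u : ℝ → Fin n → ℂ} {u' : Fin n → ℂ} {k₀ : ℝ} (h : HasDerivAt u u' k₀) :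
    HasDerivAt (fun k => star z ⬝ᵥ (A *ᵥ u k)) (star z ⬝ᵥ (A *ᵥ u')) k₀ := by
  simp only [dotProduct, mulVec, Finset.mul_sum]
  exact HasDerivAt.fun_sum fun i _ => HasDerivAt.fun_sum fun j _ =>
    ((hasDerivAt_pi.mp h j).const_mul (A i j)).const_mul (star z i)

theorem stmt_1 {n : ℕ} (hn : 1 ≤ n) (L0 L1 L2 M : Matrix (Fin n) (Fin n) ℝ) (k₀ : ℝ)
    (ω : ℝ → ℝ) (u : ℝ → Fin n → ℂ)
    (hω : DifferentiableAt ℝ ω k₀) (hu : DifferentiableAt ℝ u k₀)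
    (heq : ∀ᶠ k in nhds k₀, Wop L0 L1 L2 M k (ω k) *ᵥ u k = 0)
    (hzgv : deriv ω k₀ = 0)
    (z : Fin n → ℂ)
    (hz : (Wop L0 L1 L2 M k₀ (ω k₀))ᵀ *ᵥ star z = 0) :
    star z ⬝ᵥ ((((-2 * (k₀ : ℂ)) • L2.map Complex.ofReal
      + Complex.I • L1.map Complex.ofReal)) *ᵥ u k₀) = 0 := by
  set L2c := L2.map Complex.ofReal
  set L1c := L1.map Complex.ofReal
  set L0c := L0.map Complex.ofReal
  set Mc := M.map Complex.ofReal
  set u' := deriv u k₀ with hu'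
  have hud : HasDerivAt u u' k₀ := hu.hasDerivAt
  -- the scalar function
  set F : ℝ → ℂ := fun k => (Complex.I * k) ^ 2 * (star z ⬝ᵥ (L2c *ᵥ u k))
    + (Complex.I * k) * (star z ⬝ᵥ (L1c *ᵥ u k))
    + (star z ⬝ᵥ (L0c *ᵥ u k))
    + ((ω k : ℂ)) ^ 2 * (star z ⬝ᵥ (Mc *ᵥ u k)) with hF
  have hFW : ∀ k, F k = star z ⬝ᵥ (Wop L0 L1 L2 M k (ω k) *ᵥ u k) := by
    intro k
    simp [hF, Wop, add_mulVec, smul_mulVec, dotProduct_add, dotProduct_smul,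
      smul_eq_mul, L2c, L1c, L0c, Mc]
  -- derivative of complexified k
  have hk : HasDerivAt (fun k : ℝ => (k : ℂ)) 1 k₀ := Complex.ofRealCLM.hasDerivAt
  have hIk : HasDerivAt (fun k : ℝ => Complex.I * k) Complex.I k₀ := by
    simpa using hk.const_mul Complex.I
  have hIk2 : HasDerivAt (fun k : ℝ => (Complex.I * k) ^ 2) (-2 * k₀) k₀ := by
    have h := hIk.mul hIk
    simp only [← pow_two] at h
    exact h.congr_deriv (by linear_combination (2 * (k₀ : ℂ)) * Complex.I_sq)
  have hωc : HasDerivAt (fun k => ((ω k : ℂ))) ((deriv ω k₀ : ℝ) : ℂ) k₀ :=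
    hω.hasDerivAt.ofReal_comp
  have hω2 : HasDerivAt (fun k => ((ω k : ℂ)) ^ 2) 0 k₀ := by
    have h := hωc.mul hωc
    simp only [← pow_two] at h
    exact h.congr_deriv (by simp [hzgv])
  have h2 := dot_hasDerivAt L2c z hud
  have h1 := dot_hasDerivAt L1c z hud
  have h0 := dot_hasDerivAt L0c z hud
  have hM := dot_hasDerivAt Mc z hud
  have hFd : HasDerivAt F
      ((-2 * (k₀ : ℂ)) * (star z ⬝ᵥ (L2c *ᵥ u k₀))
        + (Complex.I * k₀) ^ 2 * (star z ⬝ᵥ (L2c *ᵥ u'))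
        + (Complex.I * (star z ⬝ᵥ (L1c *ᵥ u k₀))
          + (Complex.I * k₀) * (star z ⬝ᵥ (L1c *ᵥ u')))
        + (star z ⬝ᵥ (L0c *ᵥ u'))
        + (0 * (star z ⬝ᵥ (Mc *ᵥ u k₀)) + ((ω k₀ : ℂ)) ^ 2 * (star z ⬝ᵥ (Mc *ᵥ u')))) k₀ :=
    (((hIk2.mul h2).add (hIk.mul h1)).add h0).add (hω2.mul hM)
  -- F is eventually zero, so its derivative is zero
  have hF0 : F =ᶠ[nhds k₀] fun _ => 0 := by
    filter_upwards [heq] with k hk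
    simp [hFW k, hk]
  have hd0 : deriv F k₀ = 0 := by
    rw [Filter.EventuallyEq.deriv_eq hF0]; simp
  have hD := hFd.deriv
  rw [hd0] at hD
  -- the W u' part vanishes since star z is a left null vector
  have hleft : star z ⬝ᵥ (Wop L0 L1 L2 M k₀ (ω k₀) *ᵥ u') = 0 := by
    rw [dotProduct_mulVec, ← mulVec_transpose, hz, zero_dotProduct]
  have hexp : (Complex.I * k₀) ^ 2 * (star z ⬝ᵥ (L2c *ᵥ u'))
      + (Complex.I * k₀) * (star z ⬝ᵥ (L1c *ᵥ u'))
      + (star z ⬝ᵥ (L0c *ᵥ u'))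
      + ((ω k₀ : ℂ)) ^ 2 * (star z ⬝ᵥ (Mc *ᵥ u')) = 0 := by
    rw [← hleft]
    simp [Wop, add_mulVec, smul_mulVec, dotProduct_add, dotProduct_smul,
      smul_eq_mul, L2c, L1c, L0c, Mc]
  have hmain : (-2 * (k₀ : ℂ)) * (star z ⬝ᵥ (L2c *ᵥ u k₀))
      + Complex.I * (star z ⬝ᵥ (L1c *ᵥ u k₀)) = 0 := by
    linear_combination -hD - hexp
  rw [add_mulVec, smul_mulVec, smul_mulVec, dotProduct_add, dotProduct_smul,
    dotProduct_smul, smul_eq_mul, smul_eq_mul]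
  linear_combination hmain
end

section
/- Let L0, L1, L2, M be real n×n matrices, let k* ∈ ℝ, and let ω : ℝ → ℝ and u : ℝ → ℂⁿ be differentiable at k* with u(k) ≠ 0 and W(k, ω(k)) · u(k) = 0 for all k in a neighborhood of k*, and suppose ω'(k*) = 0 (so that (k*, ω(k*)) is a ZGV point). Set ω* := ω(k*) and λ* := i·k*. Then λ* is a multiple eigenvalue of the quadratic eigenvalue problem obtained by fixing ω = ω*: the polynomial (X − λ*)² divides det(X²·L2 + X·L1 + (L0 + ω*²·M)), the determinant of the matrix with entries in ℂ[X]. -/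
open Matrix Polynomial

private lemma diffAt_finprod {ι : Type*} [DecidableEq ι] (s : Finset ι) (f : ι → (ℝ × ℝ) → ℂ)
    (x : ℝ × ℝ) (h : ∀ i ∈ s, DifferentiableAt ℝ (f i) x) :
    DifferentiableAt ℝ (fun p => ∏ i ∈ s, f i p) x := by
  induction s using Finset.induction_on with
  | empty => simp only [Finset.prod_empty]; exact differentiableAt_const (1 : ℂ)
  | @insert a s hn ih =>
    simp only [Finset.prod_insert hn]
    exact (h a (Finset.mem_insert_self a s)).mul
      (ih fun i hi => h i (Finset.mem_insert_of_mem hi))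

private lemma diffAt_det {m : ℕ} (f : (ℝ × ℝ) → Matrix (Fin m) (Fin m) ℂ) (x : ℝ × ℝ)
    (h : ∀ i j, DifferentiableAt ℝ (fun p => f p i j) x) :
    DifferentiableAt ℝ (fun p => (f p).det) x := by
  simp only [Matrix.det_apply, Units.smul_def, zsmul_eq_mul]
  apply DifferentiableAt.fun_sum
  intro σ _
  exact ((diffAt_finprod Finset.univ (fun i p => f p (σ i) i) x
    (fun i _ => h (σ i) i)).const_mul _)

theorem stmt_2 {n : ℕ} (hn : 1 ≤ n) (L0 L1 L2 M : Matrix (Fin n) (Fin n) ℝ) (kstar : ℝ)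
    (ω : ℝ → ℝ) (u : ℝ → Fin n → ℂ)
    (hω : DifferentiableAt ℝ ω kstar) (hu : DifferentiableAt ℝ u kstar)
    (heq : ∀ᶠ k in nhds kstar, u k ≠ 0 ∧ Wop L0 L1 L2 M k (ω k) *ᵥ u k = 0)
    (hzgv : deriv ω kstar = 0) :
    (X - C (Complex.I * kstar)) ^ 2 ∣
      Matrix.det
        ((X : ℂ[X]) ^ 2 • L2.map (fun x => C (x : ℂ)) + (X : ℂ[X]) • L1.map (fun x => C (x : ℂ))
          + L0.map (fun x => C (x : ℂ)) + C (((ω kstar : ℂ)) ^ 2) • M.map (fun x => C (x : ℂ))) := by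
  set ωs := ω kstar with hωs
  set A : Matrix (Fin n) (Fin n) ℂ[X] :=
    (X : ℂ[X]) ^ 2 • L2.map (fun x => C (x : ℂ)) + (X : ℂ[X]) • L1.map (fun x => C (x : ℂ))
      + L0.map (fun x => C (x : ℂ)) + C (((ωs : ℂ)) ^ 2) • M.map (fun x => C (x : ℂ)) with hA
  set P : ℂ[X] := A.det with hP
  -- evaluation of P
  have evalP : ∀ k : ℝ, P.eval (Complex.I * k) = (Wop L0 L1 L2 M k ωs).det := by
    intro k
    have : (evalRingHom (Complex.I * (k : ℂ))) P = (A.map (evalRingHom (Complex.I * k))).det :=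
      RingHom.map_det _ _
    rw [coe_evalRingHom] at this
    rw [this]
    congr 1
    ext i j
    simp [hA, Wop, Matrix.map_apply, Matrix.add_apply, Matrix.smul_apply, smul_eq_mul]
    ring
  -- the two-variable determinant function
  set Φ : ℝ × ℝ → ℂ := fun p => (Wop L0 L1 L2 M p.1 p.2).det with hΦdef
  have hΦ : DifferentiableAt ℝ Φ (kstar, ωs) := by
    apply diffAt_det
    intro i j
    have : (fun p : ℝ × ℝ => Wop L0 L1 L2 M p.1 p.2 i j) =
        fun p : ℝ × ℝ => (Complex.I * (p.1 : ℂ)) ^ 2 * (L2 i j : ℂ) +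
          (Complex.I * (p.1 : ℂ)) * (L1 i j : ℂ) + (L0 i j : ℂ) + ((p.2 : ℂ)) ^ 2 * (M i j : ℂ) := by
      funext p
      simp [Wop, Matrix.add_apply, Matrix.smul_apply, Matrix.map_apply, smul_eq_mul]
    rw [this]
    have h1 : DifferentiableAt ℝ (fun p : ℝ × ℝ => ((p.1 : ℂ))) (kstar, ωs) :=
      Complex.ofRealCLM.differentiableAt.comp _ differentiableAt_fst
    have h2 : DifferentiableAt ℝ (fun p : ℝ × ℝ => ((p.2 : ℂ))) (kstar, ωs) :=
      Complex.ofRealCLM.differentiableAt.comp _ differentiableAt_snd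
    exact ((((h1.const_mul Complex.I).pow 2).mul_const _).add
      ((h1.const_mul Complex.I).mul_const _)).add_const _ |>.add ((h2.pow 2).mul_const _)
  -- determinant vanishes along the curve
  have hdet : ∀ᶠ k in nhds kstar, Φ (k, ω k) = 0 := by
    filter_upwards [heq] with k ⟨hu0, hWu⟩
    exact (Matrix.exists_mulVec_eq_zero_iff).mp ⟨u k, hu0, hWu⟩
  -- derivative of G = Φ ∘ (k, ω k) is zero
  have hGderiv : deriv (fun k => Φ (k, ω k)) kstar = 0 := by
    have : (fun k => Φ (k, ω k)) =ᶠ[nhds kstar] (fun _ => (0 : ℂ)) := hdet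
    rw [this.deriv_eq, deriv_const]
  have hinner : HasDerivAt (fun k : ℝ => (k, ω k)) ((1 : ℝ), (0 : ℝ)) kstar := by
    have := (hasDerivAt_id kstar).prodMk (hω.hasDerivAt)
    rwa [hzgv] at this
  have hG : HasDerivAt (fun k => Φ (k, ω k)) (fderiv ℝ Φ (kstar, ωs) (1, 0)) kstar :=
    by have := (hΦ.hasFDerivAt).comp_hasDerivAt kstar hinner; exact this
  have hd0 : fderiv ℝ Φ (kstar, ωs) (1, 0) = 0 := by rw [← hG.deriv]; exact hGderiv
  have hinner' : HasDerivAt (fun k : ℝ => (k, ωs)) ((1 : ℝ), (0 : ℝ)) kstar :=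
    (hasDerivAt_id kstar).prodMk (hasDerivAt_const kstar ωs)
  have hH : HasDerivAt (fun k => Φ (k, ωs)) 0 kstar := by
    have := (hΦ.hasFDerivAt).comp_hasDerivAt kstar hinner'
    rwa [hd0] at this
  -- H as polynomial evaluation
  set Q : ℂ[X] := P.comp (C Complex.I * X) with hQ
  have hHQ : (fun k : ℝ => Φ (k, ωs)) = fun k : ℝ => Q.eval ((k : ℝ) : ℂ) := by
    funext k
    simp only [hQ, eval_comp, eval_mul, eval_C, eval_X]
    exact ((evalP k).symm)
  have hH2 : HasDerivAt (fun k : ℝ => Q.eval ((k : ℝ) : ℂ)) (Q.derivative.eval (kstar : ℂ)) kstar :=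
    (Q.hasDerivAt ((kstar : ℝ) : ℂ)).comp_ofReal
  have hQd : Q.derivative.eval (kstar : ℂ) = 0 := by
    rw [hHQ] at hH
    exact (hH2.unique hH)
  -- translate to P
  have hPd : P.derivative.eval (Complex.I * kstar) = 0 := by
    have : Q.derivative = C Complex.I * P.derivative.comp (C Complex.I * X) := by
      rw [hQ, derivative_comp]
      simp only [derivative_mul, derivative_C, derivative_X, zero_mul, mul_one, zero_add]
    rw [this] at hQd
    simp only [eval_mul, eval_C, eval_comp, eval_mul, eval_X] at hQd
    rcases mul_eq_zero.mp hQd with h | h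
    · exact absurd h Complex.I_ne_zero
    · exact h
  have hP0 : P.eval (Complex.I * kstar) = 0 := by
    rw [evalP kstar]
    exact hdet.self_of_nhds
  -- conclude
  by_cases hPz : P = 0
  · rw [hPz]; exact dvd_zero _
  · have h2 : 1 < P.rootMultiplicity (Complex.I * kstar) :=
      (Polynomial.one_lt_rootMultiplicity_iff_isRoot hPz).mpr ⟨hP0, hPd⟩
    calc (X - C (Complex.I * kstar)) ^ 2
        ∣ (X - C (Complex.I * kstar)) ^ P.rootMultiplicity (Complex.I * kstar) :=
          pow_dvd_pow _ h2
      _ ∣ P := P.pow_rootMultiplicity_dvd _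
end

section
/- Let R be an m×m complex matrix, S an n×n upper triangular complex matrix (S k i = 0 whenever k > i), and D an m×n complex matrix. Then an m×n complex matrix Y satisfies the Sylvester equation R*Y + Y*S = D if and only if for every column index i, (R + S i i • 1) *ᵥ yᵢ = dᵢ − Σ_{k < i} S k i • y_k, where yᵢ and dᵢ denote the i-th columns of Y and D, respectively. -/
open Matrix

namespace Matrix

variable {l m n α : Type*} [Fintype m] [CommSemiring α]

theorem col_mul (A : Matrix l m α) (B : Matrix m n α) (i : n) :
    (fun j => (A * B) j i) = A *ᵥ fun j => B j i :=
  rfl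

theorem col_mul_eq_sum (Y : Matrix l m α) (S : Matrix m m α) (i : m) :
    (fun j => (Y * S) j i) = ∑ k, S k i • fun j => Y j k := by
  ext j
  simp only [mul_apply, Finset.sum_apply, Pi.smul_apply, smul_eq_mul, mul_comm]

theorem col_mul_of_blockTriangular [LinearOrder m] [LocallyFiniteOrderBot m]
    (Y : Matrix l m α) {S : Matrix m m α} (hS : S.BlockTriangular id) (i : m) :
    (fun j => (Y * S) j i) =
      S i i • (fun j => Y j i) + ∑ k ∈ Finset.Iio i, S k i • fun j => Y j k := by
  have hS_col : ∀ k ∉ Finset.Iic i, S k i • (fun j => Y j k) = 0 := fun k hk => by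
    rw [hS (by simpa using hk), zero_smul]
  rw [col_mul_eq_sum, ← Finset.sum_subset (Finset.subset_univ _) fun k _ => hS_col k,
    ← Finset.Iio_insert, Finset.sum_insert Finset.notMem_Iio_self]

end Matrix

theorem stmt_11 {m n : ℕ} (R : Matrix (Fin m) (Fin m) ℂ) (S : Matrix (Fin n) (Fin n) ℂ)
    (hS : ∀ k i : Fin n, i < k → S k i = 0) (D Y : Matrix (Fin m) (Fin n) ℂ) :
    R * Y + Y * S = D ↔
      ∀ i : Fin n,
        (R + S i i • (1 : Matrix (Fin m) (Fin m) ℂ)) *ᵥ (fun j => Y j i) =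
          (fun j => D j i) - ∑ k ∈ Finset.Iio i, S k i • (fun j => Y j k) := by
  have hS_upper : S.BlockTriangular id := fun k i h => hS k i h
  have hcol : ∀ i, (fun j => (R * Y + Y * S) j i) =
      (R + S i i • (1 : Matrix (Fin m) (Fin m) ℂ)) *ᵥ (fun j => Y j i) +
        ∑ k ∈ Finset.Iio i, S k i • fun j => Y j k := fun i => by
    change (fun j => (R * Y) j i + (Y * S) j i) = _
    rw [← Pi.add_def, col_mul, col_mul_of_blockTriangular Y hS_upper,
      add_mulVec, smul_mulVec, one_mulVec, add_assoc]
  simp only [eq_sub_iff_add_eq, ← hcol, funext_iff]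
  rw [forall_comm, Matrix.ext_iff]
end

section
/- Let A be an m×m complex matrix and B an n×n complex matrix, with Schur decompositions A = Q*R*Qᴴ and B = U*S*Uᴴ, where Q, U are unitary and R, S are upper triangular. If the Kronecker-sum matrix Iₙ ⊗ₖ A + Bᵀ ⊗ₖ Iₘ is invertible (i.e., the Sylvester equation A*X + X*B = C is nonsingular), then for every index i, the matrix R + S i i • 1 is invertible. -/
/-! Conjugating by the unitary `Uᴴᵀ ⊗ₖ Q` turns `Iₙ ⊗ₖ A + Bᵀ ⊗ₖ Iₘ` into `Iₙ ⊗ₖ R + Sᵀ ⊗ₖ Iₘ`.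
Since `S` is upper triangular, this matrix is block triangular with respect to the first
index, and its diagonal blocks are the matrices `R + S i i • 1`. Its determinant is therefore
`∏ i, det (R + S i i • 1)`, and it is nonzero exactly when every factor is. -/

open Matrix Kronecker

namespace Matrix

variable {ι κ α : Type*} [DecidableEq ι] [DecidableEq κ] [CommRing α]

/-- The matrix of the Sylvester operator `X ↦ A * X + X * B`, with `X` indexed column by column. -/
def kroneckerSum (A : Matrix κ κ α) (B : Matrix ι ι α) : Matrix (ι × κ) (ι × κ) α :=
  (1 : Matrix ι ι α) ⊗ₖ A + Bᵀ ⊗ₖ (1 : Matrix κ κ α)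

theorem BlockTriangular.kroneckerSum [LinearOrder ι] (T : Matrix κ κ α) {S : Matrix ι ι α}
    (hS : S.BlockTriangular id) :
    (Matrix.kroneckerSum T S).BlockTriangular fun p => OrderDual.toDual p.1 := by
  intro p q hqp
  have hpq : p.1 < q.1 := hqp
  simp [Matrix.kroneckerSum, one_apply_ne hpq.ne, hS hpq]

variable [Fintype ι] [Fintype κ]

theorem kroneckerSum_conj {Q Q' T : Matrix κ κ α} {U U' S : Matrix ι ι α}
    (hQ : Q * Q' = 1) (hU : U * U' = 1) :
    kroneckerSum (Q * T * Q') (U * S * U') = (U'ᵀ ⊗ₖ Q) * kroneckerSum T S * (Uᵀ ⊗ₖ Q') := by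
  have hUt : U'ᵀ * Uᵀ = 1 := by rw [← transpose_mul, hU, transpose_one]
  simp only [kroneckerSum, mul_add, add_mul, ← mul_kronecker_mul, Matrix.mul_one, hUt, hQ,
    transpose_mul, Matrix.mul_assoc]

theorem det_toSquareBlock_kroneckerSum (T : Matrix κ κ α) (S : Matrix ι ι α) (i : ι) :
    ((kroneckerSum T S).toSquareBlock (fun p => p.1) i).det = (T + S i i • 1).det := by
  let e : κ ≃ {p : ι × κ // p.1 = i} :=
    { toFun := fun j => ⟨(i, j), rfl⟩
      invFun := fun p => p.1.2
      left_inv := fun _ => rfl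
      right_inv := fun ⟨⟨_, _⟩, h⟩ => by subst h; rfl }
  rw [← det_submatrix_equiv_self e]
  congr 1
  ext j k
  simp [e, kroneckerSum, toSquareBlock_def, one_apply, mul_comm]

theorem det_kroneckerSum_of_blockTriangular [LinearOrder ι] (T : Matrix κ κ α)
    {S : Matrix ι ι α} (hS : S.BlockTriangular id) :
    (kroneckerSum T S).det = ∏ i, (T + S i i • 1).det := by
  rw [(hS.kroneckerSum T).det_fintype]
  exact Fintype.prod_equiv OrderDual.toDual.symm _ _ fun i => det_toSquareBlock_kroneckerSum T S _

end Matrix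

theorem stmt_12_general {m n : ℕ} (A Q R : Matrix (Fin m) (Fin m) ℂ) (B U S : Matrix (Fin n) (Fin n) ℂ)
    (hQ : Q * Qᴴ = 1) (hU : U * Uᴴ = 1)
    (hS : ∀ k i : Fin n, i < k → S k i = 0)
    (hA : A = Q * R * Qᴴ) (hB : B = U * S * Uᴴ)
    (hinv : IsUnit ((1 : Matrix (Fin n) (Fin n) ℂ) ⊗ₖ A + Bᵀ ⊗ₖ (1 : Matrix (Fin m) (Fin m) ℂ))) :
    ∀ i : Fin n, IsUnit (R + S i i • (1 : Matrix (Fin m) (Fin m) ℂ)) := by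
  intro i
  change IsUnit (kroneckerSum A B) at hinv
  rw [hA, hB, kroneckerSum_conj hQ hU, isUnit_iff_isUnit_det, det_mul, det_mul] at hinv
  have hdet := isUnit_of_mul_isUnit_right (isUnit_of_mul_isUnit_left hinv)
  rw [det_kroneckerSum_of_blockTriangular R hS, IsUnit.prod_univ_iff] at hdet
  exact (isUnit_iff_isUnit_det _).2 (hdet i)

theorem stmt_12 {m n : ℕ} (A Q R : Matrix (Fin m) (Fin m) ℂ) (B U S : Matrix (Fin n) (Fin n) ℂ)
    (hQ : Q * Qᴴ = 1) (hU : U * Uᴴ = 1)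
    (hR : ∀ k i : Fin m, i < k → R k i = 0) (hS : ∀ k i : Fin n, i < k → S k i = 0)
    (hA : A = Q * R * Qᴴ) (hB : B = U * S * Uᴴ)
    (hinv : IsUnit ((1 : Matrix (Fin n) (Fin n) ℂ) ⊗ₖ A + Bᵀ ⊗ₖ (1 : Matrix (Fin m) (Fin m) ℂ))) :
    ∀ i : Fin n, IsUnit (R + S i i • (1 : Matrix (Fin m) (Fin m) ℂ)) :=
  stmt_12_general A Q R B U S hQ hU hS hA hB hinv
end

section
/- Let N : ℂ → Matrix (Fin n) (Fin n) ℂ have all entries analytic in a neighborhood of ξ ∈ ℂ. Assume that ξ is an eigenvalue of algebraic multiplicity two and geometric multiplicity one of the nonlinear eigenvalue problem N(λ)u = 0, i.e., the analytic function λ ↦ det(N(λ)) has a zero of order exactly 2 at ξ, and the kernel of N(ξ) (as a linear map ℂⁿ → ℂⁿ) has dimension 1. Let nonzero vectors u, z, s, p ∈ ℂⁿ satisfy: N(ξ)·u = 0; N(ξ)·s + N'(ξ)·u = 0; zᴴ·N(ξ) = 0; pᴴ·N(ξ) + zᴴ·N'(ξ) = 0, where N'(ξ) and N''(ξ) denote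 the entrywise first and second derivatives of N at ξ. Then zᴴ·N'(ξ)·s + pᴴ·N'(ξ)·u + zᴴ·N''(ξ)·u ≠ 0. -/
open Matrix Filter

private lemma analyticAt_deriv' {f : ℂ → ℂ} {x : ℂ} (h : AnalyticAt ℂ f x) :
    AnalyticAt ℂ (deriv f) x := by
  have h1 : AnalyticAt ℂ (fun y => (ContinuousLinearMap.apply ℂ ℂ (1:ℂ)) (fderiv ℂ f y)) x :=
    (ContinuousLinearMap.apply ℂ ℂ (1:ℂ)).analyticAt _ |>.comp h.fderiv
  exact h1.congr (by filter_upwards with y; simp [ContinuousLinearMap.apply_apply, fderiv_apply_one_eq_deriv])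

private lemma factor_one' {f : ℂ → ℂ} {ξ : ℂ} (hf : AnalyticAt ℂ f ξ) (h0 : f ξ = 0) :
    ∃ h : ℂ → ℂ, AnalyticAt ℂ h ξ ∧ f =ᶠ[nhds ξ] fun l => (l - ξ) * h l := by
  rcases eq_or_ne (analyticOrderAt f ξ) ⊤ with ht | ht
  · refine ⟨0, analyticAt_const, ?_⟩
    filter_upwards [analyticOrderAt_eq_top.mp ht] with l hl; simp [hl]
  · lift analyticOrderAt f ξ to ℕ using ht with k hk
    obtain ⟨g, hg, hgne, hfac⟩ := (hf.analyticOrderAt_eq_natCast (n := k)).mp hk.symm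
    have hk0 : k ≠ 0 := by
      rintro rfl
      apply hgne
      have := hfac.self_of_nhds
      simpa [h0] using this.symm
    refine ⟨fun l => (l - ξ) ^ (k - 1) * g l, by
      exact ((analyticAt_id.sub analyticAt_const).pow _).mul hg, ?_⟩
    filter_upwards [hfac] with l hl
    rw [hl, smul_eq_mul, ← mul_assoc, ← pow_succ']
    congr 2
    omega

private lemma factor_two' {f : ℂ → ℂ} {ξ : ℂ} (hf : AnalyticAt ℂ f ξ) (h0 : f ξ = 0)
    (h1 : deriv f ξ = 0) :
    ∃ h : ℂ → ℂ, AnalyticAt ℂ h ξ ∧ f =ᶠ[nhds ξ] fun l => (l - ξ) ^ 2 * h l := by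
  obtain ⟨g, hg, hfac⟩ := factor_one' hf h0
  have hgξ : g ξ = 0 := by
    have hd : deriv f ξ = deriv (fun l => (l - ξ) * g l) ξ := hfac.deriv_eq
    rw [hd] at h1
    rw [deriv_fun_mul (by fun_prop) hg.differentiableAt] at h1
    simpa using h1
  obtain ⟨h, hh, hfac2⟩ := factor_one' hg hgξ
  refine ⟨h, hh, ?_⟩
  filter_upwards [hfac, hfac2] with l e1 e2
  rw [e1, e2]; ring

private lemma eq_at_of_punctured' {F G : ℂ → ℂ} {ξ : ℂ}
    (h : ∀ᶠ l in nhdsWithin ξ {ξ}ᶜ, F l = G l) (hF : ContinuousAt F ξ) (hG : ContinuousAt G ξ) :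
    F ξ = G ξ := by
  have h' : F =ᶠ[nhdsWithin ξ {ξ}ᶜ] G := h
  have h1 : Filter.Tendsto F (nhdsWithin ξ {ξ}ᶜ) (nhds (F ξ)) :=
    hF.continuousWithinAt.tendsto
  have h2 : Filter.Tendsto F (nhdsWithin ξ {ξ}ᶜ) (nhds (G ξ)) :=
    (hG.continuousWithinAt.tendsto).congr' h'.symm
  exact tendsto_nhds_unique h1 h2

private lemma second_deriv_sq' {h : ℂ → ℂ} {ξ : ℂ} (hh : AnalyticAt ℂ h ξ) {g : ℂ → ℂ}
    (hg : g =ᶠ[nhds ξ] fun l => (l - ξ) ^ 2 * h l) :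
    deriv (deriv g) ξ = 2 * h ξ := by
  have hev : ∀ᶠ l in nhds ξ, AnalyticAt ℂ h l := hh.eventually_analyticAt
  have hd : deriv g =ᶠ[nhds ξ] fun l => 2 * (l - ξ) * h l + (l - ξ) ^ 2 * deriv h l := by
    filter_upwards [hg.deriv, hev] with l e1 e2
    rw [e1, deriv_fun_mul (by fun_prop) e2.differentiableAt]
    simp
    try ring
  rw [hd.deriv_eq]
  rw [deriv_fun_add (DifferentiableAt.fun_mul (by fun_prop) hh.differentiableAt)
      (DifferentiableAt.fun_mul (by fun_prop) (analyticAt_deriv' hh).differentiableAt)]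
  rw [deriv_fun_mul (by fun_prop) hh.differentiableAt,
      deriv_fun_mul (by fun_prop) (analyticAt_deriv' hh).differentiableAt]
  simp

private lemma det_analyticAt' {k : ℕ} {M : ℂ → Matrix (Fin k) (Fin k) ℂ} {x : ℂ}
    (h : ∀ i j, AnalyticAt ℂ (fun l => M l i j) x) :
    AnalyticAt ℂ (fun l => (M l).det) x := by
  have : (fun l => (M l).det)
      = fun l => ∑ σ : Equiv.Perm (Fin k), (Equiv.Perm.sign σ : ℂ) * ∏ i, M l (σ i) i := by
    funext l
    rw [Matrix.det_apply]
    congr 1; funext σ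
    simp [Units.smul_def, zsmul_eq_mul]
  rw [this]
  exact Finset.analyticAt_fun_sum _ fun σ _ =>
    analyticAt_const.mul (Finset.analyticAt_fun_prod _ fun i _ => h (σ i) i)

private lemma deriv_quadratic' (c₀ c₁ c₂ ξ : ℂ) (l : ℂ) :
    deriv (fun l => c₀ + c₁ * (l - ξ) + c₂ * (l - ξ) ^ 2) l = c₁ + 2 * c₂ * (l - ξ) := by
  have hb : HasDerivAt (fun l : ℂ => l - ξ) 1 l := (hasDerivAt_id l).sub_const ξ
  have h1 := ((hb.const_mul c₁).const_add c₀).fun_add ((hb.fun_pow 2).const_mul c₂)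
  have h2 : HasDerivAt (fun l => c₀ + c₁ * (l - ξ) + c₂ * (l - ξ) ^ 2)
      (c₁ + 2 * c₂ * (l - ξ)) l := by
    exact h1.congr_deriv (by ring)
  exact h2.deriv

private lemma second_deriv_poly_mul' {f : ℂ → ℂ} {ξ : ℂ} (hf : AnalyticAt ℂ f ξ) (c₀ c₁ c₂ : ℂ) :
    deriv (deriv (fun l => (c₀ + c₁ * (l - ξ) + c₂ * (l - ξ) ^ 2) * f l)) ξ
      = 2 * c₂ * f ξ + 2 * c₁ * deriv f ξ + c₀ * deriv (deriv f) ξ := by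
  have hd : deriv (fun l => (c₀ + c₁ * (l - ξ) + c₂ * (l - ξ) ^ 2) * f l)
      =ᶠ[nhds ξ] fun l => (c₁ + 2 * c₂ * (l - ξ)) * f l
        + (c₀ + c₁ * (l - ξ) + c₂ * (l - ξ) ^ 2) * deriv f l := by
    filter_upwards [hf.eventually_analyticAt] with l hl
    rw [deriv_fun_mul (by fun_prop) hl.differentiableAt, deriv_quadratic']
  rw [hd.deriv_eq]
  have hf' := analyticAt_deriv' hf
  rw [deriv_fun_add (DifferentiableAt.fun_mul (by fun_prop) hf.differentiableAt)
      (DifferentiableAt.fun_mul (by fun_prop) hf'.differentiableAt),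
    deriv_fun_mul (by fun_prop) hf.differentiableAt,
    deriv_fun_mul (by fun_prop) hf'.differentiableAt]
  have e1 : deriv (fun l => c₁ + 2 * c₂ * (l - ξ)) ξ = 2 * c₂ := by
    have hb : HasDerivAt (fun l : ℂ => l - ξ) 1 ξ := (hasDerivAt_id ξ).sub_const ξ
    have h2 : HasDerivAt (fun l => c₁ + 2 * c₂ * (l - ξ)) (2 * c₂) ξ := by
      exact ((hb.const_mul (2 * c₂)).const_add c₁).congr_deriv (by ring)
    exact h2.deriv
  rw [e1, deriv_quadratic']
  simp
  ring

theorem stmt_14 {n : ℕ} (N : ℂ → Matrix (Fin n) (Fin n) ℂ) (ξ : ℂ)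
    (hN : ∀ i j : Fin n, AnalyticAt ℂ (fun l => N l i j) ξ)
    (hdet : AnalyticAt ℂ (fun l => (N l).det) ξ)
    (horder : analyticOrderAt (fun l => (N l).det) ξ = 2)
    (hgeo : Module.finrank ℂ (LinearMap.ker (N ξ).mulVecLin) = 1)
    (u z s p : Fin n → ℂ)
    (hu0 : u ≠ 0) (hz0 : z ≠ 0) (hs0 : s ≠ 0) (hp0 : p ≠ 0)
    (hu : N ξ *ᵥ u = 0)
    (hs : N ξ *ᵥ s + (Matrix.of fun i j => deriv (fun l => N l i j) ξ) *ᵥ u = 0)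
    (hz : star z ᵥ* N ξ = 0)
    (hp : star p ᵥ* N ξ + star z ᵥ* (Matrix.of fun i j => deriv (fun l => N l i j) ξ) = 0) :
    star z ⬝ᵥ ((Matrix.of fun i j => deriv (fun l => N l i j) ξ) *ᵥ s)
      + star p ⬝ᵥ ((Matrix.of fun i j => deriv (fun l => N l i j) ξ) *ᵥ u)
      + star z ⬝ᵥ ((Matrix.of fun i j => deriv (deriv (fun l => N l i j)) ξ) *ᵥ u) ≠ 0 := by
  classical
  have hn : n ≠ 0 := by
    rintro rfl
    exact hu0 (funext fun i => i.elim0)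
  obtain ⟨m, rfl⟩ : ∃ m, n = m + 1 := ⟨n - 1, by omega⟩
  obtain ⟨i₀, hi₀⟩ : ∃ i, u i ≠ 0 := by
    by_contra hc
    push_neg at hc
    exact hu0 (funext fun i => hc i)
  obtain ⟨j₀, hj₀⟩ : ∃ j, z j ≠ 0 := by
    by_contra hc
    push_neg at hc
    exact hz0 (funext fun j => hc j)
  -- abbreviations
  set N1 : Matrix (Fin (m+1)) (Fin (m+1)) ℂ :=
    Matrix.of fun i j => deriv (fun l => N l i j) ξ with hN1
  set N2 : Matrix (Fin (m+1)) (Fin (m+1)) ℂ :=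
    Matrix.of fun i j => deriv (deriv (fun l => N l i j)) ξ with hN2
  -- componentwise hypotheses
  have hz' : ∀ j, ∑ i, star (z i) * N ξ i j = 0 := by
    intro j
    have := congrFun hz j
    simpa [Matrix.vecMul, dotProduct] using this
  have hu' : ∀ i, ∑ j, N ξ i j * u j = 0 := by
    intro i
    have := congrFun hu i
    simpa [Matrix.mulVec, dotProduct] using this
  have hs' : ∀ i, (∑ j, N ξ i j * s j) + ∑ j, N1 i j * u j = 0 := by
    intro i
    have := congrFun hs i
    simpa [Matrix.mulVec, dotProduct] using this
  have hp' : ∀ j, (∑ i, star (p i) * N ξ i j) + ∑ i, star (z i) * N1 i j = 0 := by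
    intro j
    have := congrFun hp j
    simpa [Matrix.vecMul, dotProduct] using this
  -- the vector functions
  set a : ℂ → Fin (m+1) → ℂ := fun l i => star (z i) + (l - ξ) * star (p i) with ha
  set b : ℂ → Fin (m+1) → ℂ := fun l j => u j + (l - ξ) * s j with hb
  have haan : ∀ i, AnalyticAt ℂ (fun l => a l i) ξ := fun i => by
    exact analyticAt_const.add ((analyticAt_id.sub analyticAt_const).mul analyticAt_const)
  have hban : ∀ j, AnalyticAt ℂ (fun l => b l j) ξ := fun j => by
    exact analyticAt_const.add ((analyticAt_id.sub analyticAt_const).mul analyticAt_const)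
  set P : ℂ → Matrix (Fin (m+1)) (Fin (m+1)) ℂ :=
    fun l => (1 : Matrix (Fin (m+1)) (Fin (m+1)) ℂ).updateRow j₀ (a l) with hP
  set Q : ℂ → Matrix (Fin (m+1)) (Fin (m+1)) ℂ :=
    fun l => (1 : Matrix (Fin (m+1)) (Fin (m+1)) ℂ).updateCol i₀ (b l) with hQ
  have hPan : ∀ i k, AnalyticAt ℂ (fun l => P l i k) ξ := by
    intro i k
    by_cases hi : i = j₀
    · subst hi
      simpa [hP, Matrix.updateRow_self] using haan k
    · simpa [hP, Matrix.updateRow_ne hi] using analyticAt_const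
  have hQan : ∀ i k, AnalyticAt ℂ (fun l => Q l i k) ξ := by
    intro i k
    by_cases hk : k = i₀
    · subst hk
      simpa [hQ, Matrix.updateCol_self] using hban i
    · simpa [hQ, Matrix.updateCol_ne hk] using analyticAt_const
  set Mt : ℂ → Matrix (Fin (m+1)) (Fin (m+1)) ℂ := fun l => P l * N l * Q l with hMt
  have hMapply : ∀ l i k, Mt l i k = ∑ y, (∑ x, P l i x * N l x y) * Q l y k := by
    intro l i k
    simp [hMt, Matrix.mul_apply]
  have hMan : ∀ i k, AnalyticAt ℂ (fun l => Mt l i k) ξ := by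
    intro i k
    have : (fun l => Mt l i k) = fun l => ∑ y, (∑ x, P l i x * N l x y) * Q l y k := by
      funext l; exact hMapply l i k
    rw [this]
    exact Finset.analyticAt_fun_sum _ fun y _ =>
      (Finset.analyticAt_fun_sum _ fun x _ => (hPan i x).mul (hN x y)).mul (hQan y k)
  set w : ℂ → Fin (m+1) → ℂ := fun l j => ∑ i, a l i * N l i j with hw
  set v : ℂ → Fin (m+1) → ℂ := fun l i => ∑ j, N l i j * b l j with hv
  set g : ℂ → ℂ := fun l => ∑ j, w l j * b l j with hg
  have hwan : ∀ j, AnalyticAt ℂ (fun l => w l j) ξ := fun j =>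
    Finset.analyticAt_fun_sum _ fun i _ => (haan i).mul (hN i j)
  have hvan : ∀ i, AnalyticAt ℂ (fun l => v l i) ξ := fun i =>
    Finset.analyticAt_fun_sum _ fun j _ => (hN i j).mul (hban j)
  -- entry identities
  have hMrow : ∀ l k, Mt l j₀ k = ∑ j, w l j * Q l j k := by
    intro l k
    rw [hMapply]
    congr 1; funext y
    congr 1
    simp [hP, hw, Matrix.updateRow_self]
  have hMcol : ∀ l i, Mt l i i₀ = ∑ x, P l i x * v l x := by
    intro l i
    rw [hMapply]
    have : ∀ y, Q l y i₀ = b l y := fun y => by simp [hQ, Matrix.updateCol_self]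
    simp only [this, Finset.sum_mul, Finset.mul_sum, hv]
    rw [Finset.sum_comm]
    exact Finset.sum_congr rfl fun x _ => Finset.sum_congr rfl fun y _ => by ring
  have hMg : ∀ l, Mt l j₀ i₀ = g l := by
    intro l
    rw [hMrow]
    simp only [hg]
    congr 1; funext j
    congr 1
    simp [hQ, Matrix.updateCol_self]
  -- values and derivatives of w and v entries at ξ
  have hw0 : ∀ j, w ξ j = 0 := by
    intro j
    simp only [hw, ha]
    simpa using hz' j
  have hv0 : ∀ i, v ξ i = 0 := by
    intro i
    simp only [hv, hb]
    simpa using hu' i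
  have hwd : ∀ j, deriv (fun l => w l j) ξ = 0 := by
    intro j
    have e : deriv (fun l => w l j) ξ = ∑ i, deriv (fun l => a l i * N l i j) ξ := by
      simp only [hw]
      exact deriv_fun_sum fun i _ => ((haan i).mul (hN i j)).differentiableAt
    rw [e]
    have e2 : ∀ i : Fin (m+1), deriv (fun l => a l i * N l i j) ξ
        = star (p i) * N ξ i j + star (z i) * N1 i j := by
      intro i
      rw [deriv_fun_mul (haan i).differentiableAt (hN i j).differentiableAt]
      have d1 : deriv (fun l => a l i) ξ = star (p i) := by
        have hd : HasDerivAt (fun l : ℂ => star (z i) + (l - ξ) * star (p i)) (star (p i)) ξ := by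
          have hbd : HasDerivAt (fun l : ℂ => l - ξ) 1 ξ := (hasDerivAt_id ξ).sub_const ξ
          simpa using (hbd.mul_const (star (p i))).const_add (star (z i))
        simpa only [ha] using hd.deriv
      have d0 : a ξ i = star (z i) := by simp [ha]
      rw [d1, d0]
      simp [hN1]
    rw [Finset.sum_congr rfl fun i _ => e2 i, Finset.sum_add_distrib]
    exact hp' j
  have hvd : ∀ i, deriv (fun l => v l i) ξ = 0 := by
    intro i
    have e : deriv (fun l => v l i) ξ = ∑ j, deriv (fun l => N l i j * b l j) ξ := by
      simp only [hv]
      exact deriv_fun_sum fun j _ => ((hN i j).mul (hban j)).differentiableAt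
    rw [e]
    have e2 : ∀ j : Fin (m+1), deriv (fun l => N l i j * b l j) ξ
        = N1 i j * u j + N ξ i j * s j := by
      intro j
      rw [deriv_fun_mul (hN i j).differentiableAt (hban j).differentiableAt]
      have d1 : deriv (fun l => b l j) ξ = s j := by
        have hd : HasDerivAt (fun l : ℂ => u j + (l - ξ) * s j) (s j) ξ := by
          have hbd : HasDerivAt (fun l : ℂ => l - ξ) 1 ξ := (hasDerivAt_id ξ).sub_const ξ
          simpa using (hbd.mul_const (s j)).const_add (u j)
        simpa only [hb] using hd.deriv
      have d0 : b ξ j = u j := by simp [hb]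
      rw [d1, d0]
      simp [hN1]
    rw [Finset.sum_congr rfl fun j _ => e2 j, Finset.sum_add_distrib]
    rw [add_comm]
    exact hs' i
  -- factorizations
  choose d hdan hdfac using fun j => factor_two' (hwan j) (hw0 j) (hwd j)
  choose c hcan hcfac using fun i => factor_two' (hvan i) (hv0 i) (hvd i)
  have hall_w : ∀ᶠ l in nhds ξ, ∀ j, w l j = (l - ξ)^2 * d j l :=
    eventually_all.mpr fun j => hdfac j
  have hall_v : ∀ᶠ l in nhds ξ, ∀ i, v l i = (l - ξ)^2 * c i l :=
    eventually_all.mpr fun i => hcfac i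
  set hfun : ℂ → ℂ := fun l => ∑ j, d j l * b l j with hhfun
  have hfan : AnalyticAt ℂ hfun ξ := Finset.analyticAt_fun_sum _ fun j _ => (hdan j).mul (hban j)
  have hgfac : g =ᶠ[nhds ξ] fun l => (l - ξ)^2 * hfun l := by
    filter_upwards [hall_w] with l hl
    simp only [hg, hhfun, Finset.mul_sum]
    exact Finset.sum_congr rfl fun j _ => by rw [hl j]; ring
  have hrowfac : ∀ k, ∀ᶠ l in nhds ξ, Mt l j₀ k = (l - ξ)^2 * ∑ j, d j l * Q l j k := by
    intro k
    filter_upwards [hall_w] with l hl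
    rw [hMrow, Finset.mul_sum]
    exact Finset.sum_congr rfl fun j _ => by rw [hl j]; ring
  have hcolfac : ∀ i, ∀ᶠ l in nhds ξ, Mt l i i₀ = (l - ξ)^2 * ∑ x, P l i x * c x l := by
    intro i
    filter_upwards [hall_v] with l hl
    rw [hMcol, Finset.mul_sum]
    exact Finset.sum_congr rfl fun x _ => by rw [hl x]; ring
  -- determinants of P and Q
  have hdetP : ∀ l, (P l).det = a l j₀ := by
    intro l
    have e : P l = Matrix.updateRow 1 j₀ (a l) := by rw [hP]
    rw [e]
    rw [show (1 : Matrix (Fin (m+1)) (Fin (m+1)) ℂ)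
        = (1 : Matrix (Fin (m+1)) (Fin (m+1)) ℂ)ᵀ from (Matrix.transpose_one).symm,
      Matrix.updateRow_transpose, Matrix.det_transpose]
    rw [← Matrix.cramer_apply, Matrix.cramer_one]
    rfl
  have hdetQ : ∀ l, (Q l).det = b l i₀ := by
    intro l
    have e : Q l = Matrix.updateCol 1 i₀ (b l) := by rw [hQ]
    rw [e]
    rw [← Matrix.cramer_apply, Matrix.cramer_one]
    rfl
  have hdetM : ∀ l, (Mt l).det = a l j₀ * (N l).det * b l i₀ := by
    intro l
    simp only [hMt]
    rw [Matrix.det_mul, Matrix.det_mul, hdetP l, hdetQ l]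
    try ring
  -- factorization of det N
  have horder' : analyticOrderAt (fun l => (N l).det) ξ = (2 : ℕ) := by exact_mod_cast horder
  obtain ⟨φ, hφan, hφ0, hφfac⟩ := (hdet.analyticOrderAt_eq_natCast (n := 2)).mp horder'
  -- the minors for i ≠ j₀ contribute at order 4
  have hterm : ∀ i : Fin (m+1), ∃ ρ : ℂ → ℂ, AnalyticAt ℂ ρ ξ ∧ (i ≠ j₀ →
      ∀ᶠ l in nhds ξ, Mt l i i₀ * ((Mt l).submatrix i.succAbove i₀.succAbove).det
        = (l - ξ)^4 * ρ l) := by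
    intro i
    by_cases hij : i = j₀
    · exact ⟨0, analyticAt_const, fun hne => absurd hij hne⟩
    obtain ⟨r, hr⟩ := Fin.exists_succAbove_eq (Ne.symm hij)
    refine ⟨fun l => (∑ x, P l i x * c x l) *
        (((Mt l).submatrix i.succAbove i₀.succAbove).updateRow r
          (fun y => ∑ j, d j l * Q l j (i₀.succAbove y))).det, ?_, fun _ => ?_⟩
    · apply AnalyticAt.mul
      · exact Finset.analyticAt_fun_sum _ fun x _ => (hPan i x).mul (hcan x)
      · apply det_analyticAt'
        intro x y
        by_cases hxr : x = r
        · subst hxr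
          simpa [Matrix.updateRow_self] using
            (Finset.analyticAt_fun_sum Finset.univ
              fun j (_ : j ∈ Finset.univ) => (hdan j).mul (hQan j (i₀.succAbove y)))
        · simpa [Matrix.updateRow_ne hxr, Matrix.submatrix_apply] using
            hMan (i.succAbove x) (i₀.succAbove y)
    · have hallrow : ∀ᶠ l in nhds ξ, ∀ y, Mt l j₀ (i₀.succAbove y)
          = (l - ξ)^2 * ∑ j, d j l * Q l j (i₀.succAbove y) :=
        eventually_all.mpr fun y => hrowfac (i₀.succAbove y)
      filter_upwards [hallrow, hcolfac i] with l h1 h2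
      have hA : ((Mt l).submatrix i.succAbove i₀.succAbove) r
          = (l - ξ)^2 • fun y => ∑ j, d j l * Q l j (i₀.succAbove y) := by
        funext y
        simp only [Matrix.submatrix_apply, hr, Pi.smul_apply, smul_eq_mul]
        exact h1 y
      rw [h2]
      conv_lhs => rw [← Matrix.updateRow_eq_self
          ((Mt l).submatrix i.succAbove i₀.succAbove) r, hA]
      rw [Matrix.det_updateRow_smul]
      ring
  choose ρ hρan hρfac using hterm
  set R : ℂ → ℂ := fun l => ∑ i ∈ Finset.univ.erase j₀,
    (-1:ℂ)^((i:ℕ)+(i₀:ℕ)) * ρ i l with hR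
  have hRan : AnalyticAt ℂ R ξ :=
    Finset.analyticAt_fun_sum _ fun i _ => analyticAt_const.mul (hρan i)
  set B : ℂ → ℂ := fun l => ((Mt l).submatrix j₀.succAbove i₀.succAbove).det with hB
  have hBan : AnalyticAt ℂ B ξ := det_analyticAt' fun x y => hMan _ _
  have hkey : ∀ᶠ l in nhds ξ, a l j₀ * ((l - ξ)^2 * φ l) * b l i₀
      = (-1:ℂ)^((j₀:ℕ)+(i₀:ℕ)) * ((l - ξ)^2 * hfun l) * B l + (l - ξ)^4 * R l := by
    have hall : ∀ᶠ l in nhds ξ, ∀ i : Fin (m+1), i ≠ j₀ →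
        Mt l i i₀ * ((Mt l).submatrix i.succAbove i₀.succAbove).det = (l - ξ)^4 * ρ i l := by
      rw [eventually_all]
      intro i
      by_cases hij : i = j₀
      · exact Eventually.of_forall fun l h => absurd hij h
      · filter_upwards [hρfac i hij] with l hl
        exact fun _ => hl
    filter_upwards [hφfac, hgfac, hall] with l h1 h2 h3
    have hdN : a l j₀ * ((l - ξ)^2 * φ l) * b l i₀ = (Mt l).det := by
      rw [hdetM l, h1]
      simp only [smul_eq_mul]
      try ring
    rw [hdN, Matrix.det_succ_column (Mt l) i₀,
      ← Finset.add_sum_erase _ _ (Finset.mem_univ j₀), hMg l, h2]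
    congr 1
    rw [hR, Finset.mul_sum]
    refine Finset.sum_congr rfl fun i hi => ?_
    rw [mul_assoc, h3 i (Finset.ne_of_mem_erase hi)]
    ring
  have hkeyp : ∀ᶠ l in nhdsWithin ξ {ξ}ᶜ, a l j₀ * φ l * b l i₀
      = (-1:ℂ)^((j₀:ℕ)+(i₀:ℕ)) * hfun l * B l + (l - ξ)^2 * R l := by
    filter_upwards [hkey.filter_mono nhdsWithin_le_nhds, self_mem_nhdsWithin] with l hk hlne
    have hlne' : l ≠ ξ := by simpa using hlne
    have ht : (l - ξ)^2 ≠ 0 := pow_ne_zero _ (sub_ne_zero.mpr hlne')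
    apply mul_left_cancel₀ ht
    linear_combination hk
  have hcont1 : ContinuousAt (fun l => a l j₀ * φ l * b l i₀) ξ :=
    (((haan j₀).continuousAt.mul hφan.continuousAt).mul (hban i₀).continuousAt)
  have hcont2 : ContinuousAt (fun l =>
      (-1:ℂ)^((j₀:ℕ)+(i₀:ℕ)) * hfun l * B l + (l - ξ)^2 * R l) ξ := by
    apply ContinuousAt.add
    · exact (continuousAt_const.mul hfan.continuousAt).mul hBan.continuousAt
    · exact (by fun_prop : ContinuousAt (fun l : ℂ => (l - ξ)^2) ξ).mul hRan.continuousAt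
  have hval := eq_at_of_punctured' hkeyp hcont1 hcont2
  have hval' : star (z j₀) * φ ξ * u i₀ = (-1:ℂ)^((j₀:ℕ)+(i₀:ℕ)) * hfun ξ * B ξ := by
    have e0 : a ξ j₀ = star (z j₀) := by simp [ha]
    have e1 : b ξ i₀ = u i₀ := by simp [hb]
    rw [e0, e1] at hval
    simpa using hval
  have hfξ : hfun ξ ≠ 0 := by
    intro h0
    rw [h0] at hval'
    simp only [mul_zero, zero_mul] at hval'
    exact (mul_ne_zero (mul_ne_zero (star_ne_zero.mpr hj₀) hφ0) hi₀) hval'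
  -- second derivative of g
  have hgdd : deriv (deriv g) ξ = 2 * hfun ξ := second_deriv_sq' hfan hgfac
  -- compute the second derivative of g explicitly
  set q0 : Fin (m+1) → Fin (m+1) → ℂ := fun i j => star (z i) * u j with hq0
  set q1 : Fin (m+1) → Fin (m+1) → ℂ := fun i j => star (z i) * s j + star (p i) * u j with hq1
  set q2 : Fin (m+1) → Fin (m+1) → ℂ := fun i j => star (p i) * s j with hq2
  have hgeq : g = fun l => ∑ i, ∑ j,
      (q0 i j + q1 i j * (l - ξ) + q2 i j * (l - ξ)^2) * N l i j := by
    funext l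
    simp only [hg, hw, Finset.sum_mul]
    rw [Finset.sum_comm]
    exact Finset.sum_congr rfl fun i _ => Finset.sum_congr rfl fun j _ => by
      simp only [ha, hb, hq0, hq1, hq2]
      ring
  have hterm_an : ∀ i j : Fin (m+1), AnalyticAt ℂ
      (fun l => (q0 i j + q1 i j * (l - ξ) + q2 i j * (l - ξ)^2) * N l i j) ξ := by
    intro i j
    exact ((analyticAt_const.add
        (analyticAt_const.mul (analyticAt_id.sub analyticAt_const))).add
        (analyticAt_const.mul ((analyticAt_id.sub analyticAt_const).pow 2))).mul (hN i j)
  have hNev : ∀ᶠ l in nhds ξ, ∀ i j : Fin (m+1), AnalyticAt ℂ (fun l' => N l' i j) l :=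
    eventually_all.mpr fun i => eventually_all.mpr fun j => (hN i j).eventually_analyticAt
  have hd1 : deriv g =ᶠ[nhds ξ] fun l => ∑ i, ∑ j,
      deriv (fun l' => (q0 i j + q1 i j * (l' - ξ) + q2 i j * (l' - ξ)^2) * N l' i j) l := by
    filter_upwards [hNev] with l hl
    rw [hgeq]
    rw [deriv_fun_sum fun i _ => DifferentiableAt.fun_sum fun j _ =>
      DifferentiableAt.fun_mul (by fun_prop) (hl i j).differentiableAt]
    exact Finset.sum_congr rfl fun i _ => deriv_fun_sum fun j _ =>
      DifferentiableAt.fun_mul (by fun_prop) (hl i j).differentiableAt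
  have hd2 : deriv (deriv g) ξ = ∑ i, ∑ j,
      deriv (deriv (fun l' => (q0 i j + q1 i j * (l' - ξ) + q2 i j * (l' - ξ)^2) * N l' i j)) ξ := by
    rw [hd1.deriv_eq]
    rw [deriv_fun_sum fun i _ => DifferentiableAt.fun_sum fun j _ =>
      (analyticAt_deriv' (hterm_an i j)).differentiableAt]
    exact Finset.sum_congr rfl fun i _ => deriv_fun_sum fun j _ =>
      (analyticAt_deriv' (hterm_an i j)).differentiableAt
  have hd3 : deriv (deriv g) ξ = ∑ i, ∑ j,
      (2 * q2 i j * N ξ i j + 2 * q1 i j * N1 i j + q0 i j * N2 i j) := by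
    rw [hd2]
    refine Finset.sum_congr rfl fun i _ => Finset.sum_congr rfl fun j _ => ?_
    rw [second_deriv_poly_mul' (hN i j)]
    simp [hN1, hN2]
  -- relations from hp' and hs'
  have rA : (∑ i, ∑ j, star (p i) * (N ξ i j * s j))
      + (∑ i, ∑ j, star (z i) * (N1 i j * s j)) = 0 := by
    have key : ∀ (S : Matrix (Fin (m+1)) (Fin (m+1)) ℂ) (q : Fin (m+1) → ℂ),
        (∑ i, ∑ j, q i * (S i j * s j)) = ∑ j, (∑ i, q i * S i j) * s j := by
      intro S q
      rw [Finset.sum_comm]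
      exact Finset.sum_congr rfl fun j _ => by
        rw [Finset.sum_mul]
        exact Finset.sum_congr rfl fun i _ => by ring
    rw [key (N ξ) (fun i => star (p i)), key N1 (fun i => star (z i)),
      ← Finset.sum_add_distrib]
    refine Finset.sum_eq_zero fun j _ => ?_
    rw [← add_mul, hp' j, zero_mul]
  have rB : (∑ i, ∑ j, star (p i) * (N ξ i j * s j))
      + (∑ i, ∑ j, star (p i) * (N1 i j * u j)) = 0 := by
    rw [← Finset.sum_add_distrib]
    refine Finset.sum_eq_zero fun i _ => ?_
    rw [← Finset.sum_add_distrib]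
    have : ∀ j : Fin (m+1), star (p i) * (N ξ i j * s j) + star (p i) * (N1 i j * u j)
        = star (p i) * (N ξ i j * s j + N1 i j * u j) := fun j => by ring
    rw [Finset.sum_congr rfl fun j _ => this j, ← Finset.mul_sum, Finset.sum_add_distrib,
      hs' i, mul_zero]
  -- the target equals the second derivative of g
  have hsum : (∑ i, ∑ j, (2 * q2 i j * N ξ i j + 2 * q1 i j * N1 i j + q0 i j * N2 i j))
      = 2 * (∑ i, ∑ j, star (p i) * (N ξ i j * s j))
        + 2 * (∑ i, ∑ j, star (z i) * (N1 i j * s j))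
        + 2 * (∑ i, ∑ j, star (p i) * (N1 i j * u j))
        + ∑ i, ∑ j, star (z i) * (N2 i j * u j) := by
    simp only [Finset.mul_sum, ← Finset.sum_add_distrib]
    exact Finset.sum_congr rfl fun i _ => Finset.sum_congr rfl fun j _ => by
      simp only [hq0, hq1, hq2]
      ring
  have e1 : star z ⬝ᵥ (N1 *ᵥ s) = ∑ i, ∑ j, star (z i) * (N1 i j * s j) := by
    simp [dotProduct, Matrix.mulVec, Finset.mul_sum]
  have e2 : star p ⬝ᵥ (N1 *ᵥ u) = ∑ i, ∑ j, star (p i) * (N1 i j * u j) := by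
    simp [dotProduct, Matrix.mulVec, Finset.mul_sum]
  have e3 : star z ⬝ᵥ (N2 *ᵥ u) = ∑ i, ∑ j, star (z i) * (N2 i j * u j) := by
    simp [dotProduct, Matrix.mulVec, Finset.mul_sum]
  have htarget : star z ⬝ᵥ (N1 *ᵥ s) + star p ⬝ᵥ (N1 *ᵥ u) + star z ⬝ᵥ (N2 *ᵥ u)
      = 2 * hfun ξ := by
    rw [e1, e2, e3, ← hgdd, hd3, hsum]
    linear_combination (-1 : ℂ) * rA + (-1 : ℂ) * rB
  rw [htarget]
  exact mul_ne_zero two_ne_zero hfξ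
end

section
/- Let L0, L1, L2, M be real n×n matrices, λ*, μ* ∈ ℂ, and set Q(λ) := λ²·L2 + λ·L1 + L0 + μ*·M (n×n complex matrices). Assume: (i) the polynomial det(X²·L2 + X·L1 + L0 + μ*·M) ∈ ℂ[X] has λ* as a root of multiplicity exactly two; (ii) the kernel of Q(λ*) is one-dimensional, spanned by u* ≠ 0, and the kernel of Q(λ*)ᵀ is one-dimensional, spanned by conj(z*) for some z* ≠ 0 (so z*ᴴ·Q(λ*) = 0); (iii) z*ᴴ·(2λ*·L2 + L1)·u* = 0 (the ZGV condition); (iv) z*ᴴ·M·u* ≠ 0 (simplicity of ω* as an eigenvalue of W(k*,·)). Set y* := conj(z*). Then the only vectors s, t ∈ ℂⁿ and scalars α, β ∈ ℂ satisfying the five equations: Q(λ*)·s + α·(2λ*·L2 + L1)·u* + β·M·u* = 0; Q(λ*)ᵀ·t + α·(2λ*·L2 + L1)ᵀ·y* + β·Mᵀ·y* = 0; y*ᵀ·(2λ*·L2 + L1)·s + u*ᵀ·(2λ*·L2 + L1)ᵀ·t + 2α·(y*ᵀ·L2·u*) = 0; u*ᴴ·s = 0; y*ᴴ·t = 0, are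 s = 0, t = 0, α = 0, β = 0. In other words, the Jacobian J_F of the Gauss–Newton system has trivial kernel (full column rank) at such a ZGV point. -/
open Matrix Polynomial

/-- `Q(λ) = λ²L₂ + λL₁ + L₀ + μ*M` (real matrices regarded as complex). -/
noncomputable def Qmat {n : ℕ} (L0 L1 L2 M : Matrix (Fin n) (Fin n) ℝ) (mu lam : ℂ) :
    Matrix (Fin n) (Fin n) ℂ :=
  lam ^ 2 • L2.map Complex.ofReal + lam • L1.map Complex.ofReal +
    L0.map Complex.ofReal + mu • M.map Complex.ofReal



open scoped ComplexOrder in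
lemma solvable_aux {n : ℕ} (B : Matrix (Fin n) (Fin n) ℂ) (u y : Fin n → ℂ)
    (hu0 : u ≠ 0) (hy0 : y ≠ 0)
    (hker : LinearMap.ker B.mulVecLin = Submodule.span ℂ {u})
    (hkerT : LinearMap.ker (Bᵀ).mulVecLin = Submodule.span ℂ {y})
    (b : Fin n → ℂ) (hb : y ⬝ᵥ b = 0) : ∃ x, B *ᵥ x = b := by
  classical
  have hBy : y ᵥ* B = 0 := by
    have : y ∈ LinearMap.ker (Bᵀ).mulVecLin := by
      rw [hkerT]; exact Submodule.mem_span_singleton_self y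
    simpa [Matrix.mulVecLin_apply, Matrix.mulVec_transpose] using this
  set f : (Fin n → ℂ) →ₗ[ℂ] ℂ :=
    { toFun := fun w => y ⬝ᵥ w
      map_add' := fun a b => by simp [dotProduct_add]
      map_smul' := fun c a => by simp } with hf
  have hle : LinearMap.range B.mulVecLin ≤ LinearMap.ker f := by
    rintro _ ⟨x, rfl⟩
    show y ⬝ᵥ (B *ᵥ x) = 0
    rw [dotProduct_mulVec, hBy, zero_dotProduct]
  have hyy : y ⬝ᵥ star y ≠ 0 := by
    simpa using (dotProduct_self_star_eq_zero (v := y)).not.mpr hy0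
  have hfsurj : LinearMap.range f = ⊤ := by
    rw [LinearMap.range_eq_top]
    intro c
    refine ⟨(c * (y ⬝ᵥ star y)⁻¹) • star y, ?_⟩
    show y ⬝ᵥ ((c * (y ⬝ᵥ star y)⁻¹) • star y) = c
    rw [dotProduct_smul, smul_eq_mul]
    field_simp
  have h1 := LinearMap.finrank_range_add_finrank_ker B.mulVecLin
  have h2 := LinearMap.finrank_range_add_finrank_ker f
  rw [hker, finrank_span_singleton hu0] at h1
  rw [hfsurj, finrank_top] at h2
  have hdim : Module.finrank ℂ (LinearMap.range B.mulVecLin)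
      = Module.finrank ℂ (LinearMap.ker f) := by
    have hC : Module.finrank ℂ ℂ = 1 := Module.finrank_self ℂ
    omega
  have heq := Submodule.eq_of_le_of_finrank_eq hle hdim
  have : b ∈ LinearMap.range B.mulVecLin := by rw [heq]; exact hb
  obtain ⟨x, hx⟩ := this
  exact ⟨x, hx⟩


lemma mapC_mulVec {n : ℕ} (B : Matrix (Fin n) (Fin n) ℂ) (x : Fin n → ℂ) :
    (B.map Polynomial.C) *ᵥ ((Polynomial.C : ℂ →+* ℂ[X]) ∘ x)
      = (Polynomial.C : ℂ →+* ℂ[X]) ∘ (B *ᵥ x) :=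
  funext fun i => (RingHom.map_mulVec (Polynomial.C : ℂ →+* ℂ[X]) B x i).symm

lemma chain_mult {n : ℕ} (L0 L1 L2 M : Matrix (Fin n) (Fin n) ℝ) (lam mu : ℂ)
    (u v w : Fin n → ℂ) (i : Fin n) (hui : u i ≠ 0)
    (hdet : Matrix.det ((X : ℂ[X]) ^ 2 • L2.map (fun x => C (x : ℂ))
        + (X : ℂ[X]) • L1.map (fun x => C (x : ℂ)) + L0.map (fun x => C (x : ℂ))
        + C mu • M.map (fun x => C (x : ℂ))) ≠ 0)
    (h0 : Qmat L0 L1 L2 M mu lam *ᵥ u = 0)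
    (h1 : Qmat L0 L1 L2 M mu lam *ᵥ v
        + ((2 * lam) • L2.map Complex.ofReal + L1.map Complex.ofReal) *ᵥ u = 0)
    (h2 : Qmat L0 L1 L2 M mu lam *ᵥ w
        + ((2 * lam) • L2.map Complex.ofReal + L1.map Complex.ofReal) *ᵥ v
        + L2.map Complex.ofReal *ᵥ u = 0) :
    3 ≤ Polynomial.rootMultiplicity lam
      (Matrix.det ((X : ℂ[X]) ^ 2 • L2.map (fun x => C (x : ℂ))
        + (X : ℂ[X]) • L1.map (fun x => C (x : ℂ)) + L0.map (fun x => C (x : ℂ))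
        + C mu • M.map (fun x => C (x : ℂ)))) := by
  classical
  set P : Matrix (Fin n) (Fin n) ℂ[X] :=
    (X : ℂ[X]) ^ 2 • L2.map (fun x => C (x : ℂ))
        + (X : ℂ[X]) • L1.map (fun x => C (x : ℂ)) + L0.map (fun x => C (x : ℂ))
        + C mu • M.map (fun x => C (x : ℂ)) with hPdef
  set Qc := Qmat L0 L1 L2 M mu lam with hQc
  set A : Matrix (Fin n) (Fin n) ℂ :=
    (2 * lam) • L2.map Complex.ofReal + L1.map Complex.ofReal with hA
  set L2c : Matrix (Fin n) (Fin n) ℂ := L2.map Complex.ofReal with hL2c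
  set d : ℂ[X] := X - C lam with hd
  have hP : P = Qc.map C + d • (A.map C) + d ^ 2 • (L2c.map C) := by
    refine Matrix.ext fun i j => ?_
    simp only [hPdef, hQc, hA, hL2c, hd, Qmat, Matrix.add_apply, Matrix.smul_apply,
      Matrix.map_apply, smul_eq_mul, map_add, _root_.map_mul, map_pow, map_ofNat]
    ring
  set U : Fin n → ℂ[X] := (C ∘ u) + d • (C ∘ v) + d ^ 2 • (C ∘ w) with hU
  have hQv : Qc *ᵥ v = -(A *ᵥ u) := by
    rw [eq_neg_iff_add_eq_zero]; exact h1
  have hQw : Qc *ᵥ w = -(A *ᵥ v + L2c *ᵥ u) := by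
    refine eq_neg_of_add_eq_zero_left ?_
    rw [← add_assoc]; exact h2
  have expand : P *ᵥ U = d ^ 3 • ((C ∘ (A *ᵥ w)) + (C ∘ (L2c *ᵥ v)) + d • (C ∘ (L2c *ᵥ w))) := by
    rw [hP, hU]
    simp only [Matrix.add_mulVec, Matrix.smul_mulVec, Matrix.mulVec_add,
      Matrix.mulVec_smul, mapC_mulVec, h0, hQv, hQw]
    have hcomp : ∀ x y : Fin n → ℂ, ((C : ℂ →+* ℂ[X]) ∘ (x + y)) = (C ∘ x) + (C ∘ y) := by
      intro x y; funext j; simp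
    have hneg : ∀ x : Fin n → ℂ, ((C : ℂ →+* ℂ[X]) ∘ (-x)) = -(C ∘ x) := by
      intro x; funext j; simp
    have hsub : ∀ x y : Fin n → ℂ, ((C : ℂ →+* ℂ[X]) ∘ (x - y)) = (C ∘ x) - (C ∘ y) := by
      intro x y; funext j; simp
    have hz : ((C : ℂ →+* ℂ[X]) ∘ (0 : Fin n → ℂ)) = 0 := by funext j; simp
    simp only [hz, hcomp, hneg]
    module
  have hdvd : ∀ j, d ^ 3 ∣ (P.det * U j) := by
    intro j
    have key : P.det • U = (P.adjugate) *ᵥ (P *ᵥ U) := by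
      rw [Matrix.mulVec_mulVec, Matrix.adjugate_mul, Matrix.smul_mulVec,
        Matrix.one_mulVec]
    have : P.det * U j = ∑ k, P.adjugate j k * (P *ᵥ U) k := by
      have := congrFun key j
      simpa [Matrix.mulVec, dotProduct, Pi.smul_apply, smul_eq_mul] using this
    rw [this]
    refine Finset.dvd_sum fun k _ => ?_
    have : (P *ᵥ U) k = d ^ 3 * ((C ((A *ᵥ w) k)) + (C ((L2c *ᵥ v) k))
        + d * (C ((L2c *ᵥ w) k))) := by
      rw [expand]; simp only [Pi.add_apply, Pi.smul_apply, smul_eq_mul, Function.comp_apply]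
    rw [this]
    exact Dvd.dvd.mul_left (Dvd.dvd.mul_right (dvd_refl _) _) _
  have hUi : Polynomial.eval lam (U i) = u i := by
    simp [hU, hd, Pi.smul_apply, smul_eq_mul]
  have hUine : U i ≠ 0 := fun h => hui (by rw [← hUi, h, Polynomial.eval_zero])
  have hmulne : P.det * U i ≠ 0 := mul_ne_zero hdet hUine
  have h3 : 3 ≤ rootMultiplicity lam (P.det * U i) :=
    (Polynomial.le_rootMultiplicity_iff hmulne).mpr (hdvd i)
  have hU0 : rootMultiplicity lam (U i) = 0 :=
    Polynomial.rootMultiplicity_eq_zero (by simp [Polynomial.IsRoot, hUi, hui])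
  rw [Polynomial.rootMultiplicity_mul hmulne, hU0, add_zero] at h3
  exact h3


open scoped ComplexOrder in
lemma star_dp_ne {n : ℕ} {v : Fin n → ℂ} (h : v ≠ 0) : star v ⬝ᵥ v ≠ 0 :=
  fun h0 => h (dotProduct_star_self_eq_zero.mp h0)


theorem stmt_15 {n : ℕ} (L0 L1 L2 M : Matrix (Fin n) (Fin n) ℝ) (lam mu : ℂ)
    (u z : Fin n → ℂ)
    (hmult : Polynomial.rootMultiplicity lam
      (Matrix.det ((X : ℂ[X]) ^ 2 • L2.map (fun x => C (x : ℂ))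
        + (X : ℂ[X]) • L1.map (fun x => C (x : ℂ)) + L0.map (fun x => C (x : ℂ))
        + C mu • M.map (fun x => C (x : ℂ)))) = 2)
    (hu0 : u ≠ 0)
    (hker : LinearMap.ker (Qmat L0 L1 L2 M mu lam).mulVecLin = Submodule.span ℂ {u})
    (hz0 : z ≠ 0)
    (hkerT : LinearMap.ker ((Qmat L0 L1 L2 M mu lam)ᵀ).mulVecLin = Submodule.span ℂ {star z})
    (hzgv : star z ⬝ᵥ (((2 * lam) • L2.map Complex.ofReal + L1.map Complex.ofReal) *ᵥ u) = 0)
    (hsimple : star z ⬝ᵥ (M.map Complex.ofReal *ᵥ u) ≠ 0) :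
    ∀ (s t : Fin n → ℂ) (α β : ℂ),
      Qmat L0 L1 L2 M mu lam *ᵥ s
          + α • (((2 * lam) • L2.map Complex.ofReal + L1.map Complex.ofReal) *ᵥ u)
          + β • (M.map Complex.ofReal *ᵥ u) = 0 →
      (Qmat L0 L1 L2 M mu lam)ᵀ *ᵥ t
          + α • ((((2 * lam) • L2.map Complex.ofReal + L1.map Complex.ofReal))ᵀ *ᵥ star z)
          + β • ((M.map Complex.ofReal)ᵀ *ᵥ star z) = 0 →
      star z ⬝ᵥ (((2 * lam) • L2.map Complex.ofReal + L1.map Complex.ofReal) *ᵥ s)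
          + u ⬝ᵥ ((((2 * lam) • L2.map Complex.ofReal + L1.map Complex.ofReal))ᵀ *ᵥ t)
          + 2 * α * (star z ⬝ᵥ (L2.map Complex.ofReal *ᵥ u)) = 0 →
      star u ⬝ᵥ s = 0 →
      star (star z) ⬝ᵥ t = 0 →
      s = 0 ∧ t = 0 ∧ α = 0 ∧ β = 0 := by
  intro s t α β he1 he2 he3 he4 he5
  classical
  set Qc := Qmat L0 L1 L2 M mu lam with hQcdef
  set A : Matrix (Fin n) (Fin n) ℂ :=
    (2 * lam) • L2.map Complex.ofReal + L1.map Complex.ofReal with hAdef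
  set L2c := L2.map Complex.ofReal with hL2cdef
  set Mc := M.map Complex.ofReal with hMcdef
  set y := star z with hydef
  have hy0 : y ≠ 0 := fun h => hz0 (star_eq_zero.mp h)
  have hQu : Qc *ᵥ u = 0 := by
    have : u ∈ LinearMap.ker Qc.mulVecLin := by
      rw [hker]; exact Submodule.mem_span_singleton_self u
    simpa using this
  have hyQ : y ᵥ* Qc = 0 := by
    have : y ∈ LinearMap.ker (Qcᵀ).mulVecLin := by
      rw [hkerT]; exact Submodule.mem_span_singleton_self y
    simpa [Matrix.mulVec_transpose] using this
  have hQty : Qcᵀ *ᵥ y = 0 := by rw [Matrix.mulVec_transpose, hyQ]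
  have hyQs : ∀ x, y ⬝ᵥ (Qc *ᵥ x) = 0 := fun x => by
    rw [dotProduct_mulVec, hyQ, zero_dotProduct]
  -- β = 0
  have hβ : β = 0 := by
    have h := congrArg (fun x => y ⬝ᵥ x) he1
    simp only [dotProduct_add, dotProduct_smul, dotProduct_zero, smul_eq_mul] at h
    rw [hyQs s, hzgv] at h
    simpa [mul_eq_zero, hsimple] using h
  -- α = 0
  have hα : α = 0 := by
    by_contra hα
    have he1' : Qc *ᵥ s + α • (A *ᵥ u) = 0 := by
      simpa [hβ] using he1
    have he2' : Qcᵀ *ᵥ t + α • (Aᵀ *ᵥ y) = 0 := by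
      simpa [hβ] using he2
    set v : Fin n → ℂ := α⁻¹ • s with hvdef
    set w1 : Fin n → ℂ := α⁻¹ • t with hw1def
    have hs : s = α • v := by
      rw [hvdef, smul_smul, mul_inv_cancel₀ hα, one_smul]
    have ht : t = α • w1 := by
      rw [hw1def, smul_smul, mul_inv_cancel₀ hα, one_smul]
    have hQv : Qc *ᵥ v + A *ᵥ u = 0 := by
      have h := congrArg (fun x => α⁻¹ • x) he1'
      simpa [hvdef, Matrix.mulVec_smul, smul_add, smul_smul, inv_mul_cancel₀ hα] using h
    have hQw1 : Qcᵀ *ᵥ w1 + Aᵀ *ᵥ y = 0 := by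
      have h := congrArg (fun x => α⁻¹ • x) he2'
      simpa [hw1def, Matrix.mulVec_smul, smul_add, smul_smul, inv_mul_cancel₀ hα] using h
    have hswap : u ⬝ᵥ (Aᵀ *ᵥ w1) = y ⬝ᵥ (A *ᵥ v) := by
      have e1 : A *ᵥ u = -(Qc *ᵥ v) := (eq_neg_of_add_eq_zero_right hQv)
      have e2 : Qcᵀ *ᵥ w1 = -(Aᵀ *ᵥ y) := (eq_neg_of_add_eq_zero_left hQw1)
      calc u ⬝ᵥ (Aᵀ *ᵥ w1) = (A *ᵥ u) ⬝ᵥ w1 := by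
            rw [dotProduct_mulVec, Matrix.vecMul_transpose]
      _ = -((Qc *ᵥ v) ⬝ᵥ w1) := by rw [e1, neg_dotProduct]
      _ = -(v ⬝ᵥ (Qcᵀ *ᵥ w1)) := by
            rw [dotProduct_mulVec v, Matrix.vecMul_transpose, dotProduct_comm]
      _ = v ⬝ᵥ (Aᵀ *ᵥ y) := by rw [e2, dotProduct_neg, neg_neg]
      _ = (A *ᵥ v) ⬝ᵥ y := by rw [dotProduct_mulVec, Matrix.vecMul_transpose]
      _ = y ⬝ᵥ (A *ᵥ v) := dotProduct_comm _ _
    rw [hs, ht] at he3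
    simp only [Matrix.mulVec_smul, dotProduct_smul, smul_eq_mul] at he3
    rw [hswap] at he3
    have h4 : α * 2 * (y ⬝ᵥ (A *ᵥ v) + y ⬝ᵥ (L2c *ᵥ u)) = 0 := by
      linear_combination he3
    have key : y ⬝ᵥ (A *ᵥ v) + y ⬝ᵥ (L2c *ᵥ u) = 0 :=
      (mul_eq_zero.mp h4).resolve_left (mul_ne_zero hα two_ne_zero)
    obtain ⟨w, hw⟩ := solvable_aux Qc u y hu0 hy0 hker hkerT (-(A *ᵥ v + L2c *ᵥ u))
      (by rw [dotProduct_neg, dotProduct_add, key, neg_zero])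
    have h2chain : Qc *ᵥ w + A *ᵥ v + L2c *ᵥ u = 0 := by
      rw [hw]; abel
    have hdet : Matrix.det ((X : ℂ[X]) ^ 2 • L2.map (fun x => C (x : ℂ))
        + (X : ℂ[X]) • L1.map (fun x => C (x : ℂ)) + L0.map (fun x => C (x : ℂ))
        + C mu • M.map (fun x => C (x : ℂ))) ≠ 0 := by
      intro h; rw [h, Polynomial.rootMultiplicity_zero] at hmult; omega
    obtain ⟨i, hui⟩ := Function.ne_iff.mp hu0
    have h3 := chain_mult L0 L1 L2 M lam mu u v w i hui hdet hQu hQv h2chain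
    omega
  -- s = 0
  have hQs : Qc *ᵥ s = 0 := by simpa [hα, hβ] using he1
  have hsmem : s ∈ Submodule.span ℂ {u} := by
    rw [← hker]; simpa using hQs
  obtain ⟨c, hc⟩ := Submodule.mem_span_singleton.mp hsmem
  have hcu : c * (star u ⬝ᵥ u) = 0 := by
    rw [← smul_eq_mul, ← dotProduct_smul, hc]; exact he4
  have hs0 : s = 0 := by
    rw [← hc, (mul_eq_zero.mp hcu).resolve_right (star_dp_ne hu0), zero_smul]
  -- t = 0
  have hQt : Qcᵀ *ᵥ t = 0 := by simpa [hα, hβ] using he2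
  have htmem : t ∈ Submodule.span ℂ {y} := by
    rw [← hkerT]; simpa [Matrix.mulVec_transpose] using hQt
  obtain ⟨c, hc⟩ := Submodule.mem_span_singleton.mp htmem
  have hcy : c * (star y ⬝ᵥ y) = 0 := by
    rw [← smul_eq_mul, ← dotProduct_smul, hc]; exact he5
  have ht0 : t = 0 := by
    rw [← hc, (mul_eq_zero.mp hcy).resolve_right (star_dp_ne hy0), zero_smul]
  exact ⟨hs0, ht0, hα, hβ⟩
end
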